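/- arXiv:2603.22845 — 4 statements merged into one kernel-verified Lean document; each statement's English description precedes it below -/
import Mathlib

section
/- Suppose ‖ε‖₂/√n ≤ c for a constant c > 1, λ > c/√n, and max_{1≤j≤p} (1/n)|X_jᵀε| ≤ λ/2. Let β̂ be any global minimizer of the single-task DROP objective F. Then the prediction error satisfies (1/n)‖X(β* − β̂)‖₂² ≤ 2cλ Σ_{j=1}^p |β*_j − β̂_j| + 2cλ Σ_{j=1}^p |β*_j|. -/
open Finset Matrix

/-- Euclidean (ℓ2) norm of a real vector. -/
noncomputable def l2 {m : ℕ} (v : Fin m → ℝ) : ℝ := Real.sqrt (∑ k, (v k) ^ 2)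

/-- ℓ1 norm of a real vector. -/
noncomputable def l1 {m : ℕ} (v : Fin m → ℝ) : ℝ := ∑ j, |v j|

/-- The single-task DROP objective
`F(β) = (1/n)‖y − Xβ‖₂² + (λ/√n)‖y − Xβ‖₂‖β‖₁`. -/
noncomputable def Fobj {n p : ℕ} (X : Matrix (Fin n) (Fin p) ℝ) (y : Fin n → ℝ)
    (lam : ℝ) (β : Fin p → ℝ) : ℝ :=
  (1 / (n : ℝ)) * (l2 (y - X.mulVec β)) ^ 2
    + (lam / Real.sqrt n) * l2 (y - X.mulVec β) * l1 β

/-- Prediction error bound for the single-task DROP estimator. -/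
theorem stmt_1 {n p : ℕ} (hn : 1 ≤ n)
    (X : Matrix (Fin n) (Fin p) ℝ) (βstar : Fin p → ℝ) (ε : Fin n → ℝ)
    (y : Fin n → ℝ) (hy : y = X.mulVec βstar + ε)
    (c : ℝ) (hc : 1 < c) (hnoise : l2 ε / Real.sqrt n ≤ c)
    (lam : ℝ) (hlam : c / Real.sqrt n < lam)
    (hscore : ∀ j : Fin p, (1 / (n : ℝ)) * |∑ k, X k j * ε k| ≤ lam / 2)
    (βhat : Fin p → ℝ)
    (hmin : ∀ β : Fin p → ℝ, Fobj X y lam βhat ≤ Fobj X y lam β) :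
    (1 / (n : ℝ)) * (l2 (X.mulVec (βstar - βhat))) ^ 2
      ≤ 2 * c * lam * (∑ j, |βstar j - βhat j|) + 2 * c * lam * (∑ j, |βstar j|) := by
  have hn' : (0 : ℝ) < n := by exact_mod_cast hn
  have hsn : (0 : ℝ) < Real.sqrt n := Real.sqrt_pos.mpr hn'
  have hc0 : (0 : ℝ) < c := by linarith
  have hlam0 : (0 : ℝ) < lam := lt_trans (div_pos hc0 hsn) hlam
  set u : Fin n → ℝ := X.mulVec (βstar - βhat) with hu
  have hres : y - X.mulVec βhat = fun k => u k + ε k := by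
    funext k
    simp [hy, hu, Matrix.mulVec_sub]
    ring
  have hres' : y - X.mulVec βstar = ε := by
    funext k; simp [hy]
  -- squared norms
  have sqA : (l2 u) ^ 2 = ∑ k, (u k) ^ 2 := by
    rw [l2, Real.sq_sqrt (Finset.sum_nonneg fun k _ => sq_nonneg _)]
  have sqB : (l2 (fun k => u k + ε k)) ^ 2 = ∑ k, (u k + ε k) ^ 2 := by
    rw [l2, Real.sq_sqrt (Finset.sum_nonneg fun k _ => sq_nonneg _)]
  have sqE : (l2 ε) ^ 2 = ∑ k, (ε k) ^ 2 := by
    rw [l2, Real.sq_sqrt (Finset.sum_nonneg fun k _ => sq_nonneg _)]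
  have expand : ∑ k, (u k + ε k) ^ 2
      = (∑ k, (u k) ^ 2) + 2 * (∑ k, u k * ε k) + ∑ k, (ε k) ^ 2 := by
    rw [Finset.mul_sum, ← Finset.sum_add_distrib, ← Finset.sum_add_distrib]
    congr 1; funext k; ring
  have cross : ∑ k, u k * ε k
      = ∑ j, (βstar j - βhat j) * (∑ k, X k j * ε k) := by
    simp only [hu, Matrix.mulVec, dotProduct, Pi.sub_apply, Finset.sum_mul,
      Finset.mul_sum]
    rw [Finset.sum_comm]
    apply Finset.sum_congr rfl
    intro j _
    apply Finset.sum_congr rfl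
    intro k _
    ring
  -- bound on cross term
  have hS : ∀ j : Fin p, |∑ k, X k j * ε k| ≤ (n : ℝ) * lam / 2 := by
    intro j
    calc |∑ k, X k j * ε k| = (n : ℝ) * ((1 / (n : ℝ)) * |∑ k, X k j * ε k|) := by
          field_simp
      _ ≤ (n : ℝ) * (lam / 2) := mul_le_mul_of_nonneg_left (hscore j) hn'.le
      _ = (n : ℝ) * lam / 2 := by ring
  have hD0 : 0 ≤ ∑ j, |βstar j - βhat j| :=
    Finset.sum_nonneg fun j _ => abs_nonneg _
  have hB0 : 0 ≤ ∑ j, |βstar j| := Finset.sum_nonneg fun j _ => abs_nonneg _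
  have hcrossbd : |∑ k, u k * ε k| ≤ ((n : ℝ) * lam / 2) * ∑ j, |βstar j - βhat j| := by
    rw [cross]
    calc |∑ j, (βstar j - βhat j) * (∑ k, X k j * ε k)|
        ≤ ∑ j, |(βstar j - βhat j) * (∑ k, X k j * ε k)| :=
          Finset.abs_sum_le_sum_abs _ _
      _ ≤ ∑ j, |βstar j - βhat j| * ((n : ℝ) * lam / 2) := by
          apply Finset.sum_le_sum
          intro j _
          rw [abs_mul]
          exact mul_le_mul_of_nonneg_left (hS j) (abs_nonneg _)
      _ = ((n : ℝ) * lam / 2) * ∑ j, |βstar j - βhat j| := by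
          rw [Finset.mul_sum]
          apply Finset.sum_congr rfl
          intro j _; ring
  -- basic inequality from minimality
  have key := hmin βstar
  rw [Fobj, Fobj, hres, hres'] at key
  have hnonneg : 0 ≤ (lam / Real.sqrt n) * l2 (fun k => u k + ε k) * l1 βhat := by
    apply mul_nonneg (mul_nonneg (le_of_lt (div_pos hlam0 hsn)) (Real.sqrt_nonneg _))
    exact Finset.sum_nonneg fun j _ => abs_nonneg _
  -- bound λ/√n * l2 ε ≤ λ * c
  have hle : l2 ε ≤ c * Real.sqrt n := by
    rw [div_le_iff₀ hsn] at hnoise; exact hnoise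
  have hl2e : (lam / Real.sqrt n) * l2 ε ≤ lam * c := by
    have : (lam / Real.sqrt n) * l2 ε ≤ (lam / Real.sqrt n) * (c * Real.sqrt n) :=
      mul_le_mul_of_nonneg_left hle (le_of_lt (div_pos hlam0 hsn))
    calc (lam / Real.sqrt n) * l2 ε ≤ (lam / Real.sqrt n) * (c * Real.sqrt n) := this
      _ = lam * c := by field_simp
  have hterm : (lam / Real.sqrt n) * l2 ε * l1 βstar ≤ lam * c * l1 βstar :=
    mul_le_mul_of_nonneg_right hl2e hB0
  have hl1star : l1 βstar = ∑ j, |βstar j| := rfl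
  -- extract main inequality
  have hmain : (1 / (n : ℝ)) * (∑ k, (u k) ^ 2)
      ≤ -(2 / (n : ℝ)) * (∑ k, u k * ε k) + lam * c * ∑ j, |βstar j| := by
    rw [sqB, sqE, expand] at key
    rw [← hl1star]
    have e1 : (1 / (n : ℝ)) * ((∑ k, (u k) ^ 2) + 2 * (∑ k, u k * ε k) + ∑ k, (ε k) ^ 2)
        = (1 / (n : ℝ)) * (∑ k, (u k) ^ 2) + (2 / (n : ℝ)) * (∑ k, u k * ε k)
          + (1 / (n : ℝ)) * (∑ k, (ε k) ^ 2) := by ring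
    linarith [key, e1, hnonneg, hterm]
  have hcross2 : -(2 / (n : ℝ)) * (∑ k, u k * ε k)
      ≤ lam * ∑ j, |βstar j - βhat j| := by
    have h1 : -(∑ k, u k * ε k) ≤ ((n : ℝ) * lam / 2) * ∑ j, |βstar j - βhat j| :=
      le_trans (neg_le_abs _) hcrossbd
    have h2 : (0 : ℝ) < 2 / (n : ℝ) := by positivity
    have := mul_le_mul_of_nonneg_left h1 (le_of_lt h2)
    calc -(2 / (n : ℝ)) * (∑ k, u k * ε k)
        = (2 / (n : ℝ)) * (-(∑ k, u k * ε k)) := by ring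
      _ ≤ (2 / (n : ℝ)) * (((n : ℝ) * lam / 2) * ∑ j, |βstar j - βhat j|) := this
      _ = lam * ∑ j, |βstar j - βhat j| := by field_simp
  rw [sqA]
  nlinarith [hmain, hcross2, hD0, hB0, mul_nonneg hlam0.le hD0,
    mul_nonneg (mul_nonneg hc0.le hlam0.le) hB0,
    mul_nonneg (mul_nonneg hc0.le hlam0.le) hD0]
end

section
/- Suppose ‖ε‖₂/√n ≤ c for a constant c > 1, λ > c/√n, and max_{1≤j≤p} (1/n)|X_jᵀε| ≤ λ/2. Let β̂ be any global minimizer of the single-task DROP objective F. Then for every coordinate j ∈ {1,…,p}, the score is bounded as (1/n)|[Xᵀ X(β̂ − β*)]_j| ≤ (λ^{3/2}/2)·√(2c·Σ_{k=1}^p |β*_k − β̂_k|) + (λ^{3/2}/2)·√(2c·Σ_{k=1}^p |β*_k|) + λc, where the sums over all coordinates coincide with the sums over the respective active sets since inactive coordinates contribute zero. -/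
open Finset Matrix

lemma l2_nonneg' {m : ℕ} (v : Fin m → ℝ) : 0 ≤ l2 v := Real.sqrt_nonneg _

lemma l2_sq' {m : ℕ} (v : Fin m → ℝ) : (l2 v) ^ 2 = ∑ k, (v k) ^ 2 :=
  Real.sq_sqrt (Finset.sum_nonneg fun _ _ => sq_nonneg _)

lemma l1_nonneg' {m : ℕ} (v : Fin m → ℝ) : 0 ≤ l1 v :=
  Finset.sum_nonneg fun _ _ => abs_nonneg _

/-- ε-argument: if `A ≤ C + s*K` for all small positive `s`, then `A ≤ C`. -/
lemma eps_arg {A C K : ℝ} (hK : 0 ≤ K)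
    (h : ∀ s : ℝ, 0 < s → s ≤ 1 → A ≤ C + s * K) : A ≤ C := by
  refine le_of_forall_pos_le_add fun e he => ?_
  have hK1 : (0:ℝ) < K + 1 := by linarith
  have hs : (0:ℝ) < min 1 (e / (K + 1)) := lt_min one_pos (div_pos he hK1)
  have h1 := h _ hs (min_le_left _ _)
  have h2 : min 1 (e / (K + 1)) * K ≤ e := by
    calc min 1 (e / (K + 1)) * K ≤ (e / (K + 1)) * K :=
          mul_le_mul_of_nonneg_right (min_le_right _ _) hK
      _ ≤ e := by
          rw [div_mul_eq_mul_div, div_le_iff₀ hK1]; nlinarith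
  linarith

set_option maxHeartbeats 1000000 in
/-- Score bound for the single-task DROP estimator. -/
theorem stmt_2 {n p : ℕ} (hn : 1 ≤ n)
    (X : Matrix (Fin n) (Fin p) ℝ) (βstar : Fin p → ℝ) (ε : Fin n → ℝ)
    (y : Fin n → ℝ) (hy : y = X.mulVec βstar + ε)
    (c : ℝ) (hc : 1 < c) (hnoise : l2 ε / Real.sqrt n ≤ c)
    (lam : ℝ) (hlam : c / Real.sqrt n < lam)
    (hscore : ∀ j : Fin p, (1 / (n : ℝ)) * |∑ k, X k j * ε k| ≤ lam / 2)
    (βhat : Fin p → ℝ)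
    (hmin : ∀ β : Fin p → ℝ, Fobj X y lam βhat ≤ Fobj X y lam β) :
    ∀ j : Fin p,
      (1 / (n : ℝ)) * |(Xᵀ * X).mulVec (βhat - βstar) j|
        ≤ (lam ^ ((3 : ℝ) / 2) / 2) * Real.sqrt (2 * c * ∑ k, |βstar k - βhat k|)
          + (lam ^ ((3 : ℝ) / 2) / 2) * Real.sqrt (2 * c * ∑ k, |βstar k|)
          + lam * c := by
  intro j
  -- basic positivity facts
  have hn0 : (0:ℝ) < (n:ℝ) := by exact_mod_cast Nat.lt_of_lt_of_le Nat.zero_lt_one hn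
  have hsn : (0:ℝ) < Real.sqrt n := Real.sqrt_pos.mpr hn0
  have hsn2 : (Real.sqrt n) ^ 2 = (n:ℝ) := Real.sq_sqrt hn0.le
  have hc0 : (0:ℝ) < c := lt_trans one_pos hc
  have hla : (0:ℝ) < lam := lt_trans (div_pos hc0 hsn) hlam
  set L : ℝ := lam / Real.sqrt n with hLdef
  have hL0 : 0 ≤ L := le_of_lt (div_pos hla hsn)
  -- residual at βhat
  set rh : Fin n → ℝ := y - X.mulVec βhat with hrh
  set R : ℝ := l2 rh with hRdef
  set B : ℝ := l1 βhat with hBdef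
  set Q : ℝ := ∑ k, (rh k) ^ 2 with hQdef
  have hQ0 : 0 ≤ Q := Finset.sum_nonneg fun _ _ => sq_nonneg _
  have hR0 : 0 ≤ R := l2_nonneg' rh
  have hR2 : R ^ 2 = Q := l2_sq' rh
  have hB0 : 0 ≤ B := l1_nonneg' βhat
  set b : ℝ := ∑ k, X k j * rh k with hbdef
  set a : ℝ := ∑ k, (X k j) ^ 2 with hadef
  have ha0 : 0 ≤ a := Finset.sum_nonneg fun _ _ => sq_nonneg _
  have hFhat : Fobj X y lam βhat = (1 / (n:ℝ)) * Q + L * R * B := by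
    simp only [Fobj, ← hrh, ← hRdef, ← hBdef, ← hLdef, hR2]
  -- key KKT-style bound : |b| / n ≤ L * R / 2
  have hb : |b| / n ≤ L * R / 2 := by
    rcases eq_or_lt_of_le hR0 with hR | hR
    · -- R = 0 : residual is zero, b = 0
      have hQz : Q = 0 := by nlinarith [hR2]
      have hQz' : ∑ k, (rh k) ^ 2 = 0 := by rw [← hQdef]; exact hQz
      have hrz : ∀ k, rh k = 0 := by
        intro k
        have h1 : ∀ i ∈ Finset.univ, (0:ℝ) ≤ (rh i) ^ 2 := fun i _ => sq_nonneg _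
        have h3 := (Finset.sum_eq_zero_iff_of_nonneg h1).mp hQz' k (Finset.mem_univ k)
        exact pow_eq_zero_iff two_ne_zero |>.mp h3
      have hbz : b = 0 := by
        rw [hbdef]; apply Finset.sum_eq_zero; intro k _; rw [hrz k]; ring
      rw [hbz, ← hR]
      simp
    · -- R > 0
      have key : ∀ s : ℝ, 0 < s → s ≤ 1 →
          2 * R * |b| / n ≤ L * R ^ 2 + s * (R * a / n + L * a * (B + 1) / 2) := by
        intro s hs hs1
        set σ : ℝ := if 0 ≤ b then 1 else -1 with hσ
        have hσb : σ * b = |b| := by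
          rcases le_or_gt 0 b with h | h
          · simp [hσ, h, abs_of_nonneg h]
          · simp [hσ, not_le.mpr h, abs_of_neg h]
        have hσ2 : σ ^ 2 = 1 := by
          rcases le_or_gt 0 b with h | h
          · simp [hσ, h]
          · simp [hσ, not_le.mpr h]
        have hσabs : |σ| = 1 := by
          rcases le_or_gt 0 b with h | h
          · simp [hσ, h]
          · simp [hσ, not_le.mpr h]
        set t : ℝ := σ * s with ht
        have ht2 : t ^ 2 = s ^ 2 := by rw [ht, mul_pow, hσ2, one_mul]
        have htabs : |t| = s := by rw [ht, abs_mul, hσabs, one_mul, abs_of_pos hs]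
        have htb : t * b = s * |b| := by rw [ht, ← hσb]; ring
        -- the perturbed vector
        set βt : Fin p → ℝ := βhat + Pi.single j t with hβt
        have hmv : y - X.mulVec βt = fun k => rh k - t * X k j := by
          funext k
          rw [hβt, Matrix.mulVec_add, Matrix.mulVec_single]
          simp only [hrh, Pi.sub_apply, Pi.add_apply, Pi.smul_apply, op_smul_eq_mul, Matrix.col_apply]
          ring
        set Qt : ℝ := Q - 2 * s * |b| + s ^ 2 * a with hQt
        have hsumt : ∑ k, (rh k - t * X k j) ^ 2 = Qt := by
          have expand : ∀ k : Fin n, (rh k - t * X k j) ^ 2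
              = (rh k) ^ 2 - 2 * t * (X k j * rh k) + t ^ 2 * (X k j) ^ 2 := by
            intro k; ring
          rw [Finset.sum_congr rfl fun k _ => expand k]
          rw [Finset.sum_add_distrib, Finset.sum_sub_distrib, ← Finset.mul_sum,
            ← Finset.mul_sum, ← hbdef, ← hadef, ← hQdef, hQt, ht2]
          linear_combination (-2 : ℝ) * htb
        have hQt0 : 0 ≤ Qt := by
          rw [← hsumt]; exact Finset.sum_nonneg fun _ _ => sq_nonneg _
        set u : ℝ := l2 (y - X.mulVec βt) with hu
        have hu0 : 0 ≤ u := l2_nonneg' _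
        have hu2 : u ^ 2 = Qt := by
          rw [hu, l2_sq', show (y - X.mulVec βt) = fun k => rh k - t * X k j from hmv]
          simpa using hsumt
        have huQ : 2 * R * u ≤ Qt + Q := by nlinarith [sq_nonneg (R - u)]
        -- l1 bound
        have hl1t : l1 βt ≤ B + s := by
          have step : ∀ k : Fin p, |βt k| ≤ |βhat k| + |(Pi.single j t : Fin p → ℝ) k| := by
            intro k; rw [hβt]; exact abs_add_le _ _
          have hsum : ∑ k, |(Pi.single j t : Fin p → ℝ) k| = s := by
            rw [Finset.sum_eq_single j]
            · simp [htabs]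
            · intro k _ hk; simp [Pi.single_eq_of_ne hk]
            · intro h; exact absurd (Finset.mem_univ j) h
          calc l1 βt ≤ ∑ k, (|βhat k| + |(Pi.single j t : Fin p → ℝ) k|) :=
                Finset.sum_le_sum fun k _ => step k
            _ = B + s := by
                rw [Finset.sum_add_distrib, hsum]
                have hBs : (∑ k, |βhat k|) = B := by rw [hBdef]; rfl
                rw [hBs]
        have hl1t0 : 0 ≤ l1 βt := l1_nonneg' _
        -- basic inequality from minimality
        have hbase : (1 / (n:ℝ)) * Q + L * R * B ≤ (1 / (n:ℝ)) * Qt + L * u * l1 βt := by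
          have hcomp := hmin βt
          rw [hFhat] at hcomp
          simp only [Fobj, ← hLdef, ← hu] at hcomp
          rw [hu2] at hcomp
          exact hcomp
        have hmul1 : L * u * l1 βt ≤ L * u * (B + s) :=
          mul_le_mul_of_nonneg_left hl1t (mul_nonneg hL0 hu0)
        have hbase2 : (1 / (n:ℝ)) * Q + L * R * B ≤ (1 / (n:ℝ)) * Qt + L * u * (B + s) :=
          le_trans hbase (by linarith)
        have hBs0 : (0:ℝ) ≤ B + s := by linarith
        have hmul2 : L * (B + s) * (2 * R * u) ≤ L * (B + s) * (Qt + Q) :=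
          mul_le_mul_of_nonneg_left huQ (mul_nonneg hL0 hBs0)
        have hscaled : (2 * s) * (2 * R * |b| / n)
            ≤ (2 * s) * (L * R ^ 2 + s * (R * a / n + L * a * (B + 1) / 2)) := by
          have hmul3 : (2 * R) * ((1 / (n:ℝ)) * Q + L * R * B)
              ≤ (2 * R) * ((1 / (n:ℝ)) * Qt + L * u * (B + s)) :=
            mul_le_mul_of_nonneg_left hbase2 (by linarith)
          have h4 : (2 * R) * ((1 / (n:ℝ)) * Q + L * R * B)
              ≤ (2 * R) * ((1 / (n:ℝ)) * Qt) + L * (B + s) * (Qt + Q) := by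
            refine le_trans hmul3 ?_
            rw [show (2 * R) * ((1 / (n:ℝ)) * Qt + L * u * (B + s))
                = (2 * R) * ((1 / (n:ℝ)) * Qt) + L * (B + s) * (2 * R * u) from by ring]
            exact add_le_add_right hmul2 _
          rw [hQt] at h4
          rw [← hR2] at h4
          have h5 : 0 ≤ L * a * s ^ 2 * (1 - s) :=
            mul_nonneg (mul_nonneg (mul_nonneg hL0 ha0) (sq_nonneg s)) (by linarith)
          have h6 : 0 ≤ L * s * |b| * B :=
            mul_nonneg (mul_nonneg (mul_nonneg hL0 hs.le) (abs_nonneg b)) hB0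
          have h7 : 0 ≤ L * s ^ 2 * |b| :=
            mul_nonneg (mul_nonneg hL0 (sq_nonneg s)) (abs_nonneg b)
          have e1 : 2 * R * |b| / n = (2 * R * |b|) * (1 / (n:ℝ)) := by ring
          have e2 : R * a / n = (R * a) * (1 / (n:ℝ)) := by ring
          rw [e1, e2]
          linarith [h4, h5, h6, h7]
        exact le_of_mul_le_mul_left hscaled (by linarith : (0:ℝ) < 2 * s)
      have hK0 : 0 ≤ R * a / n + L * a * (B + 1) / 2 := by positivity
      have hmain : 2 * R * |b| / n ≤ L * R ^ 2 := eps_arg hK0 key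
      have h2R : (0:ℝ) < 2 * R := by linarith
      have hfin : (2 * R) * (|b| / n) ≤ (2 * R) * (L * R / 2) := by
        have e1 : (2 * R) * (|b| / n) = 2 * R * |b| / n := by ring
        have e2 : (2 * R) * (L * R / 2) = L * R ^ 2 := by ring
        rw [e1, e2]; exact hmain
      exact le_of_mul_le_mul_left hfin h2R
  -- bound on R/√n from comparison with βstar
  set E : ℝ := l2 ε with hEdef
  have hE0 : 0 ≤ E := l2_nonneg' ε
  set S : ℝ := l1 βstar with hSdef
  have hS0 : 0 ≤ S := l1_nonneg' βstar
  have hεres : y - X.mulVec βstar = ε := by rw [hy]; abel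
  have hEn : E ≤ c * Real.sqrt n := (div_le_iff₀ hsn).mp hnoise
  have hQn : (1 / (n:ℝ)) * Q ≤ c ^ 2 + lam * c * S := by
    have hcomp := hmin βstar
    rw [hFhat] at hcomp
    simp only [Fobj, hεres, ← hEdef, ← hSdef, ← hLdef] at hcomp
    have hLRB : 0 ≤ L * R * B := mul_nonneg (mul_nonneg hL0 hR0) hB0
    have hE2 : (1 / (n:ℝ)) * E ^ 2 ≤ c ^ 2 := by
      have h1 : E ^ 2 ≤ c ^ 2 * n := by nlinarith [hEn, hE0, hsn2]
      have h2 := mul_le_mul_of_nonneg_left h1 (le_of_lt (one_div_pos.mpr hn0))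
      calc (1 / (n:ℝ)) * E ^ 2 ≤ (1 / (n:ℝ)) * (c ^ 2 * n) := h2
        _ = c ^ 2 := by field_simp
    have hLES : L * E * S ≤ lam * c * S := by
      have h1 : L * E ≤ lam * c := by
        rw [hLdef, div_mul_eq_mul_div, div_le_iff₀ hsn]
        nlinarith [hEn, hla]
      exact mul_le_mul_of_nonneg_right h1 hS0
    linarith
  set w : ℝ := Real.sqrt (lam * c * S) with hw
  have hw0 : 0 ≤ w := Real.sqrt_nonneg _
  have hw2 : w ^ 2 = lam * c * S := Real.sq_sqrt (by positivity)
  have hRQ : R = Real.sqrt Q := by rw [hRdef, hQdef]; rfl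
  have hRn : R / Real.sqrt n ≤ c + w := by
    have h1 : R / Real.sqrt n = Real.sqrt (Q / n) := by
      rw [Real.sqrt_div hQ0 (n:ℝ), hRQ]
    have hQn' : Q / n ≤ c ^ 2 + lam * c * S := by
      have : Q / n = (1 / (n:ℝ)) * Q := by ring
      rw [this]; exact hQn
    have h2 : Real.sqrt (Q / n) ≤ Real.sqrt (c ^ 2 + lam * c * S) := Real.sqrt_le_sqrt hQn'
    have h3 : Real.sqrt (c ^ 2 + lam * c * S) ≤ c + w := by
      have hle : c ^ 2 + lam * c * S ≤ (c + w) ^ 2 := by nlinarith [hw2, hw0, hc0]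
      calc Real.sqrt (c ^ 2 + lam * c * S) ≤ Real.sqrt ((c + w) ^ 2) := Real.sqrt_le_sqrt hle
        _ = c + w := Real.sqrt_sq (by positivity)
    rw [h1]; linarith
  -- the score identity
  have hXd : X.mulVec (βhat - βstar) = fun k => ε k - rh k := by
    funext k
    have h1 : rh k = y k - X.mulVec βhat k := by rw [hrh]; rfl
    have h2 : ε k = y k - X.mulVec βstar k := by rw [← hεres]; rfl
    rw [Matrix.mulVec_sub]
    simp only [Pi.sub_apply]
    linarith
  have hscoreEq : (Xᵀ * X).mulVec (βhat - βstar) j = (∑ k, X k j * ε k) - b := by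
    rw [← Matrix.mulVec_mulVec, hXd]
    simp only [Matrix.mulVec, dotProduct, Matrix.transpose_apply]
    rw [hbdef, ← Finset.sum_sub_distrib]
    apply Finset.sum_congr rfl
    intro k _
    ring
  -- assemble everything
  have hgoalS : (∑ k, |βstar k|) = S := by rw [hSdef]; rfl
  rw [hscoreEq, hgoalS]
  have habs : |(∑ k, X k j * ε k) - b| ≤ |∑ k, X k j * ε k| + |b| := abs_sub _ _
  have p1 : (1 / (n:ℝ)) * |(∑ k, X k j * ε k) - b|
      ≤ (1 / (n:ℝ)) * |∑ k, X k j * ε k| + (1 / (n:ℝ)) * |b| := by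
    rw [← mul_add]
    exact mul_le_mul_of_nonneg_left habs (by positivity)
  have p2 : (1 / (n:ℝ)) * |b| = |b| / n := by ring
  have p4 : L * R / 2 ≤ (lam / 2) * (c + w) := by
    have e1 : L * R / 2 = (lam / 2) * (R / Real.sqrt n) := by rw [hLdef]; ring
    rw [e1]
    exact mul_le_mul_of_nonneg_left hRn (by positivity)
  have hpow : lam ^ ((3:ℝ)/2) = lam * Real.sqrt lam := by
    rw [show (3:ℝ)/2 = 1 + 1/2 by norm_num, Real.rpow_add hla, Real.rpow_one,
      ← Real.sqrt_eq_rpow]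
  have hsq : (lam / 2) * w ≤ (lam ^ ((3:ℝ)/2) / 2) * Real.sqrt (2 * c * S) := by
    have e1 : w = Real.sqrt lam * Real.sqrt (c * S) := by
      rw [hw, show lam * c * S = lam * (c * S) by ring, Real.sqrt_mul hla.le]
    have e2 : Real.sqrt (c * S) ≤ Real.sqrt (2 * c * S) :=
      Real.sqrt_le_sqrt (by nlinarith [hc0, hS0])
    calc (lam / 2) * w = (lam * Real.sqrt lam / 2) * Real.sqrt (c * S) := by rw [e1]; ring
      _ ≤ (lam * Real.sqrt lam / 2) * Real.sqrt (2 * c * S) := by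
          apply mul_le_mul_of_nonneg_left e2
          positivity
      _ = (lam ^ ((3:ℝ)/2) / 2) * Real.sqrt (2 * c * S) := by rw [hpow]
  have hT1 : 0 ≤ (lam ^ ((3:ℝ)/2) / 2) * Real.sqrt (2 * c * ∑ k, |βstar k - βhat k|) := by
    apply mul_nonneg
    · have := Real.rpow_nonneg hla.le ((3:ℝ)/2)
      linarith
    · exact Real.sqrt_nonneg _
  have p8 := hscore j
  have p9 : lam / 2 + (lam / 2) * c ≤ lam * c := by nlinarith [hla, hc]
  have p5 : (lam / 2) * (c + w) = (lam / 2) * c + (lam / 2) * w := by ring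
  linarith [p1, hb, p4, hsq, hT1, p8, p9]
end

section
/- Suppose the noise events (1/p) Σ_{i=1}^p ‖ε^{(i)}‖₂²/n ≤ c and max_{1≤i≤p} ‖ε^{(i)}‖₂/√n ≤ C_ε hold, with constants c > 0 and C_ε ∈ (0,1), and suppose the score event max_{1≤i≤p} ‖(1/n) X_iᵀ ε^{(i)}‖_∞ ≤ λ/2 holds. Let (b̂_1,…,b̂_p) be any global minimizer of the multi-task DROP objective H and set Δ_i = b̂_i − b*_i. Then the prediction error satisfies Σ_{i=1}^p (1/n)‖X_i Δ_i‖₂² ≤ λ(1 + C_ε) Σ_{i=1}^p ‖Δ_i‖₁ + λ Σ_{i=1}^p ( ‖X_i Δ_i‖₂/√n )·‖b̂_i‖₁. -/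
open Finset Matrix

/-- The multi-task DROP objective
`H(b₁,…,b_p) = Σᵢ [ (1/n)‖yᵢ − Xᵢbᵢ‖₂² + (λ/√n)‖yᵢ − Xᵢbᵢ‖₂‖bᵢ‖₁ ]`. -/
noncomputable def Hobj {n p : ℕ} (X : Fin p → Matrix (Fin n) (Fin p) ℝ)
    (y : Fin p → Fin n → ℝ) (lam : ℝ) (b : Fin p → Fin p → ℝ) : ℝ :=
  ∑ i, ((1 / (n : ℝ)) * (l2 (y i - (X i).mulVec (b i))) ^ 2
      + (lam / Real.sqrt n) * l2 (y i - (X i).mulVec (b i)) * l1 (b i))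

lemma l2_eq_norm' {m : ℕ} (v : Fin m → ℝ) :
    l2 v = ‖(WithLp.equiv 2 (Fin m → ℝ)).symm v‖ := by
  rw [EuclideanSpace.norm_eq]
  simp [l2, sq_abs]

lemma l2_tri' {m : ℕ} (a b : Fin m → ℝ) : l2 a - l2 (a - b) ≤ l2 b := by
  have h : (WithLp.equiv 2 (Fin m → ℝ)).symm a
      = (WithLp.equiv 2 (Fin m → ℝ)).symm (a - b) + (WithLp.equiv 2 (Fin m → ℝ)).symm b := by
    simp
  have h2 := norm_add_le ((WithLp.equiv 2 (Fin m → ℝ)).symm (a - b))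
    ((WithLp.equiv 2 (Fin m → ℝ)).symm b)
  rw [l2_eq_norm', l2_eq_norm', l2_eq_norm', h]
  linarith

lemma l1_sub_le' {m : ℕ} (a b : Fin m → ℝ) : l1 a - l1 b ≤ l1 (b - a) := by
  have h : l1 a ≤ ∑ j, (|(b - a) j| + |b j|) := by
    apply Finset.sum_le_sum
    intro j _
    have h1 := abs_sub_abs_le_abs_sub (a j) (b j)
    have h2 : |a j - b j| = |b j - a j| := abs_sub_comm _ _
    simp only [Pi.sub_apply]
    linarith
  rw [Finset.sum_add_distrib] at h
  simp only [l1] at *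
  linarith

lemma l2_sub_expand {m : ℕ} (e w : Fin m → ℝ) :
    (l2 (e - w)) ^ 2 = (l2 e) ^ 2 - 2 * (∑ k, e k * w k) + (l2 w) ^ 2 := by
  rw [l2_sq', l2_sq', l2_sq']
  have h : ∀ k : Fin m, ((e - w) k) ^ 2 = e k ^ 2 - 2 * (e k * w k) + w k ^ 2 := by
    intro k; simp only [Pi.sub_apply]; ring
  rw [Finset.sum_congr rfl fun k _ => h k]
  rw [Finset.sum_add_distrib, Finset.sum_sub_distrib, ← Finset.mul_sum]

/-- Prediction error bound for the multi-task DROP estimator. -/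
theorem stmt_7 {n p : ℕ} (hn : 1 ≤ n)
    (X : Fin p → Matrix (Fin n) (Fin p) ℝ)
    (bstar : Fin p → Fin p → ℝ) (ε : Fin p → Fin n → ℝ)
    (y : Fin p → Fin n → ℝ)
    (hy : ∀ i, y i = (X i).mulVec (bstar i) + ε i)
    (c : ℝ) (hc : 0 < c)
    (Cε : ℝ) (hCε : 0 < Cε ∧ Cε < 1)
    (hnoise1 : (1 / (p : ℝ)) * ∑ i, (l2 (ε i)) ^ 2 / (n : ℝ) ≤ c)
    (hnoise2 : ∀ i, l2 (ε i) / Real.sqrt n ≤ Cε)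
    (lam : ℝ) (hlam : 0 < lam)
    (hscore : ∀ i : Fin p, ∀ j : Fin p,
      |(1 / (n : ℝ)) * ∑ k, (X i) k j * ε i k| ≤ lam / 2)
    (bhat : Fin p → Fin p → ℝ)
    (hmin : ∀ b : Fin p → Fin p → ℝ, Hobj X y lam bhat ≤ Hobj X y lam b) :
    ∑ i, (1 / (n : ℝ)) * (l2 ((X i).mulVec (bhat i - bstar i))) ^ 2
      ≤ lam * (1 + Cε) * ∑ i, l1 (bhat i - bstar i)
        + lam * ∑ i, (l2 ((X i).mulVec (bhat i - bstar i)) / Real.sqrt n) * l1 (bhat i) := by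
  have hn0 : (0:ℝ) < n := by exact_mod_cast Nat.lt_of_lt_of_le Nat.zero_lt_one hn
  have hs0 : (0:ℝ) < Real.sqrt n := Real.sqrt_pos.mpr hn0
  set w : Fin p → Fin n → ℝ := fun i => (X i).mulVec (bhat i - bstar i) with hw
  set s : ℝ := Real.sqrt n with hsdef
  -- residual rewriting
  have hres1 : ∀ i, y i - (X i).mulVec (bstar i) = ε i := by
    intro i; rw [hy i]; abel
  have hres2 : ∀ i, y i - (X i).mulVec (bhat i) = ε i - w i := by
    intro i; rw [hy i, hw]; simp only [Matrix.mulVec_sub]; abel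
  have hH := hmin bstar
  simp only [Hobj, hres1, hres2] at hH
  rw [Finset.sum_add_distrib, Finset.sum_add_distrib] at hH
  -- per-task key inequalities
  have key12 : ∀ i ∈ Finset.univ (α := Fin p),
      (1/(n:ℝ)) * (l2 (w i)) ^ 2
        ≤ ((1/(n:ℝ)) * (l2 (ε i - w i)) ^ 2 - (1/(n:ℝ)) * (l2 (ε i)) ^ 2)
          + lam * l1 (bhat i - bstar i) := by
    intro i _
    -- score bound
    have hswap : ∑ k, ε i k * w i k
        = ∑ j, (∑ k, X i k j * ε i k) * (bhat i - bstar i) j := by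
      simp only [hw, Matrix.mulVec, dotProduct, Finset.mul_sum, Finset.sum_mul]
      rw [Finset.sum_comm]
      exact Finset.sum_congr rfl fun j _ => Finset.sum_congr rfl fun k _ => by ring
    have hb : ∀ j, (∑ k, X i k j * ε i k) * (bhat i - bstar i) j
        ≤ (lam/2 * n) * |(bhat i - bstar i) j| := by
      intro j
      have h1 := hscore i j
      rw [abs_mul, abs_of_pos (by positivity : (0:ℝ) < 1/(n:ℝ)), one_div,
        inv_mul_eq_div, div_le_iff₀ hn0] at h1
      calc (∑ k, X i k j * ε i k) * (bhat i - bstar i) j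
          ≤ |(∑ k, X i k j * ε i k) * (bhat i - bstar i) j| := le_abs_self _
        _ = |∑ k, X i k j * ε i k| * |(bhat i - bstar i) j| := abs_mul _ _
        _ ≤ (lam/2 * n) * |(bhat i - bstar i) j| :=
            mul_le_mul_of_nonneg_right h1 (abs_nonneg _)
    have hip : ∑ k, ε i k * w i k ≤ (lam/2 * n) * l1 (bhat i - bstar i) := by
      rw [hswap, l1, Finset.mul_sum]
      exact Finset.sum_le_sum fun j _ => hb j
    have hexp := l2_sub_expand (ε i) (w i)
    have h2 : (2/(n:ℝ)) * ∑ k, ε i k * w i k ≤ lam * l1 (bhat i - bstar i) := by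
      have := mul_le_mul_of_nonneg_left hip (by positivity : (0:ℝ) ≤ 2/(n:ℝ))
      have heq : (2/(n:ℝ)) * ((lam/2 * n) * l1 (bhat i - bstar i))
          = lam * l1 (bhat i - bstar i) := by field_simp
      linarith
    have hexp' : (1/(n:ℝ)) * (l2 (w i))^2
        = (1/(n:ℝ)) * (l2 (ε i - w i))^2 - (1/(n:ℝ)) * (l2 (ε i))^2
          + (2/(n:ℝ)) * ∑ k, ε i k * w i k := by
      rw [hexp]; field_simp; ring
    linarith
  have key3 : ∀ i ∈ Finset.univ (α := Fin p),
      (lam/s) * l2 (ε i) * l1 (bstar i) - (lam/s) * l2 (ε i - w i) * l1 (bhat i)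
        ≤ lam * Cε * l1 (bhat i - bstar i) + lam * (l2 (w i) / s) * l1 (bhat i) := by
    intro i _
    have hE : 0 ≤ l2 (ε i) := l2_nonneg' _
    have hW : 0 ≤ l2 (w i) := l2_nonneg' _
    have hF : 0 ≤ l2 (ε i - w i) := l2_nonneg' _
    have hLh : 0 ≤ l1 (bhat i) := l1_nonneg' _
    have hD : 0 ≤ l1 (bhat i - bstar i) := l1_nonneg' _
    have htri : l2 (ε i) - l2 (ε i - w i) ≤ l2 (w i) := l2_tri' _ _
    have hl1 : l1 (bstar i) - l1 (bhat i) ≤ l1 (bhat i - bstar i) := l1_sub_le' _ _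
    have hE2 : l2 (ε i) ≤ Cε * s := by
      have := hnoise2 i
      rw [div_le_iff₀ hs0] at this
      linarith
    have hmain : l2 (ε i) * l1 (bstar i) - l2 (ε i - w i) * l1 (bhat i)
        ≤ s * Cε * l1 (bhat i - bstar i) + l2 (w i) * l1 (bhat i) := by
      nlinarith [mul_le_mul_of_nonneg_right htri hLh,
        mul_le_mul_of_nonneg_left hl1 hE,
        mul_le_mul_of_nonneg_right hE2 hD]
    have hpos : (0:ℝ) ≤ lam / s := le_of_lt (div_pos hlam hs0)
    have := mul_le_mul_of_nonneg_left hmain hpos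
    have e1 : lam/s * (s * Cε * l1 (bhat i - bstar i) + l2 (w i) * l1 (bhat i))
        = lam * Cε * l1 (bhat i - bstar i) + lam * (l2 (w i) / s) * l1 (bhat i) := by
      field_simp
    rw [e1] at this
    linarith [this]
  have S1 := Finset.sum_le_sum key12
  rw [Finset.sum_add_distrib, Finset.sum_sub_distrib] at S1
  have S2 := Finset.sum_le_sum key3
  rw [Finset.sum_sub_distrib, Finset.sum_add_distrib] at S2
  have e1 : lam * (1 + Cε) * ∑ i, l1 (bhat i - bstar i)
      = (∑ i, lam * l1 (bhat i - bstar i)) + ∑ i, lam * Cε * l1 (bhat i - bstar i) := by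
    rw [← Finset.sum_add_distrib, Finset.mul_sum]
    exact Finset.sum_congr rfl fun i _ => by ring
  have e2 : lam * ∑ i, (l2 (w i) / s) * l1 (bhat i)
      = ∑ i, lam * (l2 (w i) / s) * l1 (bhat i) := by
    rw [Finset.mul_sum]
    exact Finset.sum_congr rfl fun i _ => by ring
  rw [e1, e2]
  linarith
end

section
/- Suppose the noise events (1/p) Σ_{i=1}^p ‖ε^{(i)}‖₂²/n ≤ c and max_{1≤i≤p} ‖ε^{(i)}‖₂/√n ≤ C_ε hold, with constants c > 0 and C_ε ∈ (0,1), and suppose the score event max_{1≤i≤p} ‖(1/n) X_iᵀ ε^{(i)}‖_∞ ≤ λ/2 holds. Let (b̂_1,…,b̂_p) be any global minimizer of the multi-task DROP objective H and set Δ_i = b̂_i − b*_i. If additionally there is a constant c_β > 0 such that λ·max_{1≤i≤p} ‖b̂_i‖₁ ≤ c_β, then the prediction error satisfies the refined bound Σ_{i=1}^p (1/n)‖X_i Δ_i‖₂² ≤ 2λ(1 + C_ε) Σ_{i=1}^p ‖Δ_i‖₁ + 2 c_β². -/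
open Finset Matrix

/-- Refined prediction error bound for the multi-task DROP
estimator under a bounded solution size. -/
theorem stmt_9 {n p : ℕ} (hn : 1 ≤ n)
    (X : Fin p → Matrix (Fin n) (Fin p) ℝ)
    (bstar : Fin p → Fin p → ℝ) (ε : Fin p → Fin n → ℝ)
    (y : Fin p → Fin n → ℝ)
    (hy : ∀ i, y i = (X i).mulVec (bstar i) + ε i)
    (c : ℝ) (hc : 0 < c)
    (Cε : ℝ) (hCε : 0 < Cε ∧ Cε < 1)
    (hnoise1 : (1 / (p : ℝ)) * ∑ i, (l2 (ε i)) ^ 2 / (n : ℝ) ≤ c)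
    (hnoise2 : ∀ i, l2 (ε i) / Real.sqrt n ≤ Cε)
    (lam : ℝ) (hlam : 0 < lam)
    (hscore : ∀ i : Fin p, ∀ j : Fin p,
      |(1 / (n : ℝ)) * ∑ k, (X i) k j * ε i k| ≤ lam / 2)
    (bhat : Fin p → Fin p → ℝ)
    (hmin : ∀ b : Fin p → Fin p → ℝ, Hobj X y lam bhat ≤ Hobj X y lam b)
    (cβ : ℝ) (hcβ : 0 < cβ)
    (hbound : ∀ i, lam * l1 (bhat i) ≤ cβ) :
    ∑ i, (1 / (n : ℝ)) * (l2 ((X i).mulVec (bhat i - bstar i))) ^ 2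
      ≤ 2 * lam * (1 + Cε) * ∑ i, l1 (bhat i - bstar i) + 2 * cβ ^ 2 := by
  have hn0 : (0 : ℝ) < (n : ℝ) := by exact_mod_cast Nat.lt_of_lt_of_le Nat.zero_lt_one hn
  have hsqrtn : (0 : ℝ) < Real.sqrt n := Real.sqrt_pos.mpr hn0
  have key : ∀ i, (1 / (n : ℝ)) * (l2 ((X i).mulVec (bhat i - bstar i))) ^ 2
      ≤ 2 * lam * (1 + Cε) * l1 (bhat i - bstar i) := by
    intro i
    set d : Fin p → ℝ := bhat i - bstar i with hd
    set v : Fin n → ℝ := (X i).mulVec d with hv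
    set e : Fin n → ℝ := ε i with he
    have hld : 0 ≤ l1 d := l1_nonneg' d
    -- inner product (score) bound
    have hip : ∑ k, e k * v k ≤ (n : ℝ) * lam / 2 * l1 d := by
      have h1 : ∑ k, e k * v k = ∑ j, (∑ k, X i k j * e k) * d j := by
        calc ∑ k, e k * v k = ∑ k, ∑ j, e k * (X i k j * d j) := by
              apply Finset.sum_congr rfl
              intro k _
              rw [hv, Matrix.mulVec, dotProduct, Finset.mul_sum]
          _ = ∑ j, ∑ k, e k * (X i k j * d j) := Finset.sum_comm
          _ = ∑ j, (∑ k, X i k j * e k) * d j := by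
              apply Finset.sum_congr rfl
              intro j _
              rw [Finset.sum_mul]
              apply Finset.sum_congr rfl
              intro k _
              ring
      rw [h1, l1, Finset.mul_sum]
      apply Finset.sum_le_sum
      intro j _
      have h3 : |∑ k, X i k j * e k| ≤ (n : ℝ) * lam / 2 := by
        have h2 := hscore i j
        rw [abs_mul, abs_of_pos (by positivity : (0 : ℝ) < 1 / (n : ℝ))] at h2
        rw [div_mul_eq_mul_div, one_mul, div_le_iff₀ hn0] at h2
        calc |∑ k, X i k j * e k| ≤ lam / 2 * (n : ℝ) := h2
          _ = (n : ℝ) * lam / 2 := by ring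
      calc (∑ k, X i k j * e k) * d j ≤ |(∑ k, X i k j * e k) * d j| := le_abs_self _
        _ = |∑ k, X i k j * e k| * |d j| := abs_mul _ _
        _ ≤ (n : ℝ) * lam / 2 * |d j| :=
            mul_le_mul_of_nonneg_right h3 (abs_nonneg _)
    -- expansion of squares
    have hexp : ∑ k, (v k) ^ 2
        = ∑ k, (e k - v k) ^ 2 - ∑ k, (e k) ^ 2 + 2 * ∑ k, e k * v k := by
      rw [Finset.mul_sum, ← Finset.sum_sub_distrib, ← Finset.sum_add_distrib]
      apply Finset.sum_congr rfl
      intro k _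
      ring
    -- residual identity
    have hev : y i - (X i).mulVec (bhat i) = e - v := by
      rw [hy i, hv, hd, Matrix.mulVec_sub]
      abel
    have hevstar : y i - (X i).mulVec (bstar i) = e := by
      rw [hy i]
      abel
    by_cases hcase : l2 (e - v) < l2 e
    · -- Case B : residual shrank, then ‖v‖² ≤ 2⟨e,v⟩
      have hB : (l2 (e - v)) ^ 2 ≤ (l2 e) ^ 2 :=
        pow_le_pow_left₀ (l2_nonneg' _) hcase.le 2
      rw [l2_sq', l2_sq'] at hB
      simp only [Pi.sub_apply] at hB
      have hsum : ∑ k, (v k) ^ 2 ≤ (n : ℝ) * lam * l1 d := by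
        rw [hexp]
        nlinarith [hip]
      rw [l2_sq']
      have h4 : (1 / (n : ℝ)) * ∑ k, (v k) ^ 2 ≤ lam * l1 d := by
        rw [div_mul_eq_mul_div, one_mul, div_le_iff₀ hn0]
        calc ∑ k, (v k) ^ 2 ≤ (n : ℝ) * lam * l1 d := hsum
          _ = lam * l1 d * (n : ℝ) := by ring
      nlinarith [mul_nonneg (mul_nonneg hlam.le hCε.1.le) hld,
        mul_nonneg hlam.le hld]
    · -- Case A : residual grew, use the basic inequality with a one-task swap
      push_neg at hcase
      -- per-task basic inequality
      have hbasic : (1 / (n : ℝ)) * (l2 (e - v)) ^ 2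
            + (lam / Real.sqrt n) * l2 (e - v) * l1 (bhat i)
          ≤ (1 / (n : ℝ)) * (l2 e) ^ 2
            + (lam / Real.sqrt n) * l2 e * l1 (bstar i) := by
        have hH := hmin (Function.update bhat i (bstar i))
        rw [Hobj, Hobj] at hH
        set F : Fin p → ℝ := fun x =>
          (1 / (n : ℝ)) * (l2 (y x - (X x).mulVec (bhat x))) ^ 2
          + (lam / Real.sqrt n) * l2 (y x - (X x).mulVec (bhat x)) * l1 (bhat x) with hF
        set G : Fin p → ℝ := fun x =>
          (1 / (n : ℝ)) * (l2 (y x - (X x).mulVec (Function.update bhat i (bstar i) x))) ^ 2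
          + (lam / Real.sqrt n) * l2 (y x - (X x).mulVec (Function.update bhat i (bstar i) x))
            * l1 (Function.update bhat i (bstar i) x) with hG
        have hsplitF : ∑ x, F x = F i + ∑ x ∈ Finset.univ.erase i, F x :=
          (Finset.add_sum_erase _ F (Finset.mem_univ i)).symm
        have hsplitG : ∑ x, G x = G i + ∑ x ∈ Finset.univ.erase i, G x :=
          (Finset.add_sum_erase _ G (Finset.mem_univ i)).symm
        have heq : ∑ x ∈ Finset.univ.erase i, G x = ∑ x ∈ Finset.univ.erase i, F x := by
          apply Finset.sum_congr rfl
          intro x hx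
          have hxi : x ≠ i := Finset.ne_of_mem_erase hx
          rw [hG, hF]
          simp only [Function.update_of_ne hxi]
        have hFG : F i ≤ G i := by
          have : ∑ x, F x ≤ ∑ x, G x := hH
          rw [hsplitF, hsplitG, heq] at this
          linarith
        rw [hF, hG] at hFG
        simp only [Function.update_self] at hFG
        rw [hev, hevstar] at hFG
        exact hFG
      -- assemble
      have hsl : 0 ≤ lam / Real.sqrt n := by positivity
      have hle2 : 0 ≤ l2 e := l2_nonneg' e
      have hmono : (lam / Real.sqrt n) * l2 e * l1 (bhat i)
          ≤ (lam / Real.sqrt n) * l2 (e - v) * l1 (bhat i) := by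
        apply mul_le_mul_of_nonneg_right _ (l1_nonneg' _)
        exact mul_le_mul_of_nonneg_left hcase hsl
      have hl1 : l1 (bstar i) - l1 (bhat i) ≤ l1 d := by
        have := l1_sub_le' (bstar i) (bhat i)
        rwa [← hd] at this
      -- (1/n)((l2(e-v))² - (l2 e)²) ≤ (lam/√n) * l2 e * l1 d
      have hstep : (1 / (n : ℝ)) * (l2 (e - v)) ^ 2 - (1 / (n : ℝ)) * (l2 e) ^ 2
          ≤ (lam / Real.sqrt n) * l2 e * l1 d := by
        have h5 : (lam / Real.sqrt n) * l2 e * l1 (bstar i)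
            - (lam / Real.sqrt n) * l2 e * l1 (bhat i)
            ≤ (lam / Real.sqrt n) * l2 e * l1 d := by
          rw [← mul_sub]
          exact mul_le_mul_of_nonneg_left hl1 (mul_nonneg hsl hle2)
        linarith
      -- (lam/√n) * l2 e ≤ lam * Cε
      have hnoise : (lam / Real.sqrt n) * l2 e ≤ lam * Cε := by
        rw [div_mul_eq_mul_div, mul_div_assoc]
        exact mul_le_mul_of_nonneg_left (hnoise2 i) hlam.le
      have hstep2 : (1 / (n : ℝ)) * (l2 (e - v)) ^ 2 - (1 / (n : ℝ)) * (l2 e) ^ 2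
          ≤ lam * Cε * l1 d := by
        calc (1 / (n : ℝ)) * (l2 (e - v)) ^ 2 - (1 / (n : ℝ)) * (l2 e) ^ 2
            ≤ (lam / Real.sqrt n) * l2 e * l1 d := hstep
          _ ≤ lam * Cε * l1 d := mul_le_mul_of_nonneg_right hnoise hld
      -- final combination
      rw [l2_sq']
      rw [hexp]
      have hips : (1 / (n : ℝ)) * (2 * ∑ k, e k * v k) ≤ lam * l1 d := by
        rw [div_mul_eq_mul_div, one_mul, div_le_iff₀ hn0]
        calc 2 * ∑ k, e k * v k ≤ 2 * ((n : ℝ) * lam / 2 * l1 d) := by linarith [hip]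
          _ = lam * l1 d * (n : ℝ) := by ring
      have hAB : (1 / (n : ℝ)) * (∑ k, (e k - v k) ^ 2 - ∑ k, (e k) ^ 2)
          ≤ lam * Cε * l1 d := by
        have e1 : (l2 (e - v)) ^ 2 = ∑ k, (e k - v k) ^ 2 := l2_sq' _
        have e2 : (l2 e) ^ 2 = ∑ k, (e k) ^ 2 := l2_sq' _
        rw [mul_sub]
        rw [e1, e2] at hstep2
        linarith
      have hfin : (1 / (n : ℝ)) * (∑ k, (e k - v k) ^ 2 - ∑ k, (e k) ^ 2
            + 2 * ∑ k, e k * v k) ≤ lam * (1 + Cε) * l1 d := by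
        rw [mul_add]
        calc (1 / (n : ℝ)) * (∑ k, (e k - v k) ^ 2 - ∑ k, (e k) ^ 2)
              + (1 / (n : ℝ)) * (2 * ∑ k, e k * v k)
            ≤ lam * Cε * l1 d + lam * l1 d := add_le_add hAB hips
          _ = lam * (1 + Cε) * l1 d := by ring
      calc (1 / (n : ℝ)) * (∑ k, (e k - v k) ^ 2 - ∑ k, (e k) ^ 2
            + 2 * ∑ k, e k * v k) ≤ lam * (1 + Cε) * l1 d := hfin
        _ ≤ 2 * lam * (1 + Cε) * l1 d := by
            nlinarith [mul_nonneg (mul_nonneg hlam.le (by linarith [hCε.1] : (0:ℝ) ≤ 1 + Cε)) hld]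
  calc ∑ i, (1 / (n : ℝ)) * (l2 ((X i).mulVec (bhat i - bstar i))) ^ 2
      ≤ ∑ i, 2 * lam * (1 + Cε) * l1 (bhat i - bstar i) :=
        Finset.sum_le_sum fun i _ => key i
    _ = 2 * lam * (1 + Cε) * ∑ i, l1 (bhat i - bstar i) := by
        rw [Finset.mul_sum]
    _ ≤ 2 * lam * (1 + Cε) * ∑ i, l1 (bhat i - bstar i) + 2 * cβ ^ 2 := by
        nlinarith [sq_nonneg cβ]
end
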